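/- arXiv:1311.5056 — 2 statements merged into one kernel-verified Lean document; each statement's English description precedes it below -/
import Mathlib

section
/- The countable generic orientation of the generic bipartite graph is homogeneous. -/
/-- A 2-partite digraph `D = (X, Y, E)`: `X` and `Y` are disjoint sets covering the
vertex set, every edge goes between the two sides, and no two opposite edges exist. -/
structure TwoPartiteDigraph (V : Type*) where
  X : Set V
  Y : Set V
  cover : X ∪ Y = Set.univ
  disj : Disjoint X Y
  E : V → V → Prop
  mem_of_edge : ∀ u v, E u v → (u ∈ X ∧ v ∈ Y) ∨ (u ∈ Y ∧ v ∈ X)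
  not_opposite : ∀ u v, E u v → ¬ E v u

namespace TwoPartiteDigraph

variable {V V₁ V₂ : Type*}

/-- Out-neighbourhood (successors). -/
def Nplus (D : TwoPartiteDigraph V) (v : V) : Set V := {w | D.E v w}

/-- In-neighbourhood (predecessors). -/
def Nminus (D : TwoPartiteDigraph V) (v : V) : Set V := {w | D.E w v}

/-- Adjacency in the underlying undirected bipartite graph. -/
def Adj (D : TwoPartiteDigraph V) (u v : V) : Prop := D.E u v ∨ D.E v u

/-- `v^⊥`: the vertices on the other side not adjacent to `v`. -/
def perp (D : TwoPartiteDigraph V) (v : V) : Set V :=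
  {w | ((v ∈ D.X ∧ w ∈ D.Y) ∨ (v ∈ D.Y ∧ w ∈ D.X)) ∧ ¬ D.Adj v w}

/-- `D` is bipartite if all edges go from `X` to `Y`, or all from `Y` to `X`. -/
def Bipartite (D : TwoPartiteDigraph V) : Prop :=
  (∀ u v, D.E u v → u ∈ D.X) ∨ (∀ u v, D.E u v → u ∈ D.Y)

/-- `φ` is an isomorphism between the subdigraphs induced on `A` and on `φ '' A`,
respecting the bipartition. -/
def IsPartialIso (D : TwoPartiteDigraph V) (A : Set V) (φ : V → V) : Prop :=
  Set.InjOn φ A ∧ (∀ a ∈ A, (a ∈ D.X ↔ φ a ∈ D.X)) ∧ (∀ a ∈ A, (a ∈ D.Y ↔ φ a ∈ D.Y)) ∧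
  ∀ a ∈ A, ∀ b ∈ A, (D.E a b ↔ D.E (φ a) (φ b))

/-- A bipartition-preserving automorphism of `D`. -/
def IsAuto (D : TwoPartiteDigraph V) (α : Equiv.Perm V) : Prop :=
  (∀ v, v ∈ D.X ↔ α v ∈ D.X) ∧ (∀ v, v ∈ D.Y ↔ α v ∈ D.Y) ∧
  ∀ u v, D.E u v ↔ D.E (α u) (α v)

/-- `D` is homogeneous: every isomorphism between finite induced subdigraphs respecting
the bipartition extends to a bipartition-preserving automorphism of `D`. -/
def Homogeneous (D : TwoPartiteDigraph V) : Prop :=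
  ∀ A : Set V, A.Finite → ∀ φ : V → V, D.IsPartialIso A φ →
    ∃ α : Equiv.Perm V, D.IsAuto α ∧ ∀ a ∈ A, α a = φ a

/-- The underlying undirected bipartite graph is complete bipartite. -/
def CompleteBip (D : TwoPartiteDigraph V) : Prop := ∀ x ∈ D.X, ∀ y ∈ D.Y, D.Adj x y

/-- `D` is a generic 2-partite digraph. -/
def IsGeneric (D : TwoPartiteDigraph V) : Prop :=
  D.CompleteBip ∧
  ∀ AX BX : Set V, AX.Finite → BX.Finite → AX ⊆ D.X → BX ⊆ D.X → Disjoint AX BX →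
  ∀ AY BY : Set V, AY.Finite → BY.Finite → AY ⊆ D.Y → BY ⊆ D.Y → Disjoint AY BY →
    (∃ y ∈ D.Y, AX ⊆ D.Nplus y ∧ BX ⊆ D.Nminus y) ∧
    (∃ x ∈ D.X, AY ⊆ D.Nplus x ∧ BY ⊆ D.Nminus x)

/-- `D` is a generic orientation of a generic bipartite graph. -/
def IsGenericOrientation (D : TwoPartiteDigraph V) : Prop :=
  ∀ AX BX CX : Set V, AX.Finite → BX.Finite → CX.Finite →
    AX ⊆ D.X → BX ⊆ D.X → CX ⊆ D.X →
    Disjoint AX BX → Disjoint AX CX → Disjoint BX CX →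
  ∀ AY BY CY : Set V, AY.Finite → BY.Finite → CY.Finite →
    AY ⊆ D.Y → BY ⊆ D.Y → CY ⊆ D.Y →
    Disjoint AY BY → Disjoint AY CY → Disjoint BY CY →
    (∃ y ∈ D.Y, AX ⊆ D.Nplus y ∧ BX ⊆ D.Nminus y ∧ CX ⊆ D.perp y) ∧
    (∃ x ∈ D.X, AY ⊆ D.Nplus x ∧ BY ⊆ D.Nminus x ∧ CY ⊆ D.perp x)

/-- `D` is (a copy of) `M_κ` with the matching oriented from `X` to `Y`:
there is a bijection `m : X → Y` such that the edges from `X` to `Y` form the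
perfect matching `{(x, m x)}` and the edges from `Y` to `X` form its bipartite
complement. -/
def IsMFixed (D : TwoPartiteDigraph V) : Prop :=
  ∃ m : V → V, Set.BijOn m D.X D.Y ∧
    (∀ x ∈ D.X, ∀ y ∈ D.Y, (D.E x y ↔ y = m x)) ∧
    (∀ x ∈ D.X, ∀ y ∈ D.Y, (D.E y x ↔ y ≠ m x))

/-- `D` is (a copy of) `M_κ`: one of the two directed parts is a perfect matching and
the other is the bipartite complement of a perfect matching. -/
def IsM (D : TwoPartiteDigraph V) : Prop :=
  ∃ m : V → V, Set.BijOn m D.X D.Y ∧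
    ((∀ x ∈ D.X, ∀ y ∈ D.Y, (D.E x y ↔ y = m x) ∧ (D.E y x ↔ y ≠ m x)) ∨
     (∀ x ∈ D.X, ∀ y ∈ D.Y, (D.E y x ↔ y = m x) ∧ (D.E x y ↔ y ≠ m x)))

/-- Isomorphism of 2-partite digraphs respecting the bipartitions. -/
def Isomorphic (D₁ : TwoPartiteDigraph V₁) (D₂ : TwoPartiteDigraph V₂) : Prop :=
  ∃ e : V₁ ≃ V₂, (∀ v, v ∈ D₁.X ↔ e v ∈ D₂.X) ∧ (∀ v, v ∈ D₁.Y ↔ e v ∈ D₂.Y) ∧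
    ∀ u v, D₁.E u v ↔ D₂.E (e u) (e v)

/-- `φ` is an isomorphism of finite induced subgraphs of the underlying undirected
bipartite graph, respecting the bipartition. -/
def IsGraphPartialIso (D : TwoPartiteDigraph V) (A : Set V) (φ : V → V) : Prop :=
  Set.InjOn φ A ∧ (∀ a ∈ A, (a ∈ D.X ↔ φ a ∈ D.X)) ∧ (∀ a ∈ A, (a ∈ D.Y ↔ φ a ∈ D.Y)) ∧
  ∀ a ∈ A, ∀ b ∈ A, (D.Adj a b ↔ D.Adj (φ a) (φ b))

/-- The underlying undirected bipartite graph of `D` is homogeneous. -/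
def GraphHomogeneous (D : TwoPartiteDigraph V) : Prop :=
  ∀ A : Set V, A.Finite → ∀ φ : V → V, D.IsGraphPartialIso A φ →
    ∃ α : Equiv.Perm V, ((∀ v, v ∈ D.X ↔ α v ∈ D.X) ∧ (∀ v, v ∈ D.Y ↔ α v ∈ D.Y) ∧
      ∀ u v, D.Adj u v ↔ D.Adj (α u) (α v)) ∧ ∀ a ∈ A, α a = φ a

/-- The underlying undirected bipartite graph of `D` is generic. -/
def UnderlyingGeneric (D : TwoPartiteDigraph V) : Prop :=
  ∀ UX VX : Set V, UX.Finite → VX.Finite → UX ⊆ D.X → VX ⊆ D.X → Disjoint UX VX →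
  ∀ UY VY : Set V, UY.Finite → VY.Finite → UY ⊆ D.Y → VY ⊆ D.Y → Disjoint UY VY →
    (∃ y ∈ D.Y, (∀ u ∈ UX, D.Adj y u) ∧ ∀ v ∈ VX, ¬ D.Adj y v) ∧
    (∃ x ∈ D.X, (∀ u ∈ UY, D.Adj x u) ∧ ∀ v ∈ VY, ¬ D.Adj x v)

end TwoPartiteDigraph

open TwoPartiteDigraph

/-!
Back and forth. Finite partial isomorphisms are encoded by their graphs, finite sets of pairs.
Such a graph extends to any new vertex `v ∈ X`: the orientation of `v` towards the domain
prescribes, for the image of the domain, which vertices the image of `v` must dominate, be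
dominated by, or be non-adjacent to, and a generic orientation supplies such a vertex outside
the finite range. Symmetry in the sides and in the two coordinates gives the remaining
extension steps, and a Rasiowa–Sikorski sequence through the countably many of them yields the
graph of an automorphism.
-/

namespace TwoPartiteDigraph

open Set

variable {V : Type*} (D : TwoPartiteDigraph V)

theorem mem_Y_iff_notMem_X {v : V} : v ∈ D.Y ↔ v ∉ D.X := by
  refine ⟨fun hY hX => D.disj.ne_of_mem hX hY rfl, fun hX => ?_⟩
  have hv : v ∈ D.X ∪ D.Y := D.cover ▸ mem_univ v
  exact hv.resolve_left hX

variable {D}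

theorem not_edge_of_mem_X {u v : V} (hu : u ∈ D.X) (hv : v ∈ D.X) : ¬ D.E u v := fun he =>
  (D.mem_of_edge u v he).elim (fun h => (D.mem_Y_iff_notMem_X.mp h.2) hv)
    (fun h => (D.mem_Y_iff_notMem_X.mp h.1) hu)

theorem mem_Y_of_edge_of_mem_X {u v : V} (hu : u ∈ D.X) (he : D.E u v) : v ∈ D.Y :=
  D.mem_Y_iff_notMem_X.mpr fun hv => not_edge_of_mem_X hu hv he

theorem mem_Y_of_edge_to_mem_X {u v : V} (hv : v ∈ D.X) (he : D.E u v) : u ∈ D.Y :=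
  D.mem_Y_iff_notMem_X.mpr fun hu => not_edge_of_mem_X hu hv he

/-- A vertex of `Y` is dominated by, dominates, or is non-adjacent to a vertex of `X`,
exclusively; so implications between these cases are equivalences. -/
theorem edge_iff_and_edge_iff_of_imp {v w a b : V} (hv : v ∈ D.X) (hw : w ∈ D.X)
    (hab : a ∈ D.X ↔ b ∈ D.X) (hout : D.E v a → D.E w b) (hin : D.E a v → D.E b w)
    (hperp : a ∈ D.Y → ¬ D.Adj v a → ¬ D.Adj w b) :
    (D.E v a ↔ D.E w b) ∧ (D.E a v ↔ D.E b w) := by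
  by_cases haX : a ∈ D.X
  · have hbX : b ∈ D.X := hab.mp haX
    exact ⟨iff_of_false (not_edge_of_mem_X hv haX) (not_edge_of_mem_X hw hbX),
      iff_of_false (not_edge_of_mem_X haX hv) (not_edge_of_mem_X hbX hw)⟩
  have hperp' := hperp (D.mem_Y_iff_notMem_X.mpr haX)
  have := D.not_opposite v a
  have := D.not_opposite w b
  unfold Adj at hperp'
  tauto

namespace IsGenericOrientation

variable (h : D.IsGenericOrientation)
include h

theorem exists_mem_X {A B C : Set V} (hA : A.Finite) (hB : B.Finite) (hC : C.Finite)
    (hAY : A ⊆ D.Y) (hBY : B ⊆ D.Y) (hCY : C ⊆ D.Y)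
    (hAB : Disjoint A B) (hAC : Disjoint A C) (hBC : Disjoint B C) :
    ∃ x ∈ D.X, A ⊆ D.Nplus x ∧ B ⊆ D.Nminus x ∧ C ⊆ D.perp x :=
  (h ∅ ∅ ∅ finite_empty finite_empty finite_empty (empty_subset _) (empty_subset _)
    (empty_subset _) (disjoint_empty _) (disjoint_empty _) (disjoint_empty _)
    A B C hA hB hC hAY hBY hCY hAB hAC hBC).2

theorem exists_mem_Y {A B C : Set V} (hA : A.Finite) (hB : B.Finite) (hC : C.Finite)
    (hAX : A ⊆ D.X) (hBX : B ⊆ D.X) (hCX : C ⊆ D.X)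
    (hAB : Disjoint A B) (hAC : Disjoint A C) (hBC : Disjoint B C) :
    ∃ y ∈ D.Y, A ⊆ D.Nplus y ∧ B ⊆ D.Nminus y ∧ C ⊆ D.perp y :=
  (h A B C hA hB hC hAX hBX hCX hAB hAC hBC
    ∅ ∅ ∅ finite_empty finite_empty finite_empty (empty_subset _) (empty_subset _)
    (empty_subset _) (disjoint_empty _) (disjoint_empty _) (disjoint_empty _)).1

/-- `x₀` dominates `U` and is dominated by `y`, so `y ∉ U` by antisymmetry. -/
theorem exists_mem_Y_notMem_dominating {U T : Set V} (hU : U.Finite) (hT : T.Finite)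
    (hUY : U ⊆ D.Y) (hTX : T ⊆ D.X) : ∃ y ∈ D.Y, y ∉ U ∧ T ⊆ D.Nplus y := by
  obtain ⟨x₀, hx₀, hUx₀, -⟩ := h.exists_mem_X hU finite_empty finite_empty hUY
    (empty_subset _) (empty_subset _) (disjoint_empty _) (disjoint_empty _) (disjoint_empty _)
  obtain ⟨y, hy, hTy, -⟩ := h.exists_mem_Y (hT.insert x₀) finite_empty finite_empty
    (insert_subset hx₀ hTX) (empty_subset _) (empty_subset _)
    (disjoint_empty _) (disjoint_empty _) (disjoint_empty _)
  exact ⟨y, hy, fun hyU => D.not_opposite y x₀ (hTy (mem_insert _ _)) (hUx₀ hyU),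
    fun t ht => hTy (mem_insert_of_mem _ ht)⟩

/-- The new vertex `x` dominates a vertex `y₀` that dominates all of `T`, so `x ∉ T`. -/
theorem exists_mem_X_notMem {A B C T : Set V} (hA : A.Finite) (hB : B.Finite) (hC : C.Finite)
    (hT : T.Finite) (hAY : A ⊆ D.Y) (hBY : B ⊆ D.Y) (hCY : C ⊆ D.Y) (hTX : T ⊆ D.X)
    (hAB : Disjoint A B) (hAC : Disjoint A C) (hBC : Disjoint B C) :
    ∃ x ∈ D.X, x ∉ T ∧ A ⊆ D.Nplus x ∧ B ⊆ D.Nminus x ∧ C ⊆ D.perp x := by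
  obtain ⟨y₀, hy₀, hy₀ABC, hTy₀⟩ := h.exists_mem_Y_notMem_dominating
    ((hA.union hB).union hC) hT (union_subset (union_subset hAY hBY) hCY) hTX
  obtain ⟨x, hx, hAx, hBx, hCx⟩ := h.exists_mem_X (hA.insert y₀) hB hC
    (insert_subset hy₀ hAY) hBY hCY
    (disjoint_insert_left.mpr ⟨fun hB' => hy₀ABC (.inl (.inr hB')), hAB⟩)
    (disjoint_insert_left.mpr ⟨fun hC' => hy₀ABC (.inr hC'), hAC⟩) hBC
  exact ⟨x, hx, fun hxT => D.not_opposite x y₀ (hAx (mem_insert _ _)) (hTy₀ hxT),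
    fun a ha => hAx (mem_insert_of_mem _ ha), hBx, hCx⟩

end IsGenericOrientation

variable (D) in
def swapSides : TwoPartiteDigraph V where
  X := D.Y
  Y := D.X
  cover := union_comm D.X D.Y ▸ D.cover
  disj := D.disj.symm
  E := D.E
  mem_of_edge u v he := (D.mem_of_edge u v he).symm
  not_opposite := D.not_opposite

theorem swapSides_perp (v : V) : D.swapSides.perp v = D.perp v := by
  ext w
  exact and_congr_left fun _ => or_comm

theorem IsGenericOrientation.swapSides (h : D.IsGenericOrientation) :
    D.swapSides.IsGenericOrientation := by
  intro AX BX CX hAX hBX hCX hAXs hBXs hCXs hABX hACX hBCX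
    AY BY CY hAY hBY hCY hAYs hBYs hCYs hABY hACY hBCY
  obtain ⟨⟨y, hy, hAy, hBy, hCy⟩, ⟨x, hx, hAx, hBx, hCx⟩⟩ := h AY BY CY hAY hBY hCY hAYs hBYs
    hCYs hABY hACY hBCY AX BX CX hAX hBX hCX hAXs hBXs hCXs hABX hACX hBCX
  exact ⟨⟨x, hx, hAx, hBx, swapSides_perp x ▸ hCx⟩, ⟨y, hy, hAy, hBy, swapSides_perp y ▸ hCy⟩⟩

variable (D) in
structure IsPartialIsoGraph (P : Set (V × V)) : Prop where
  fst_eq_iff : ∀ p ∈ P, ∀ q ∈ P, p.1 = q.1 ↔ p.2 = q.2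
  mem_X_iff : ∀ p ∈ P, p.1 ∈ D.X ↔ p.2 ∈ D.X
  edge_iff : ∀ p ∈ P, ∀ q ∈ P, D.E p.1 q.1 ↔ D.E p.2 q.2

theorem IsPartialIso.isPartialIsoGraph_image {A : Set V} {φ : V → V}
    (hφ : D.IsPartialIso A φ) : D.IsPartialIsoGraph ((fun a => (a, φ a)) '' A) := by
  obtain ⟨hinj, hX, -, hE⟩ := hφ
  refine ⟨?_, ?_, ?_⟩
  · rintro _ ⟨a, ha, rfl⟩ _ ⟨b, hb, rfl⟩
    exact ⟨congrArg φ, fun hab => hinj ha hb hab⟩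
  · rintro _ ⟨a, ha, rfl⟩
    exact hX a ha
  · rintro _ ⟨a, ha, rfl⟩ _ ⟨b, hb, rfl⟩
    exact hE a ha b hb

namespace IsPartialIsoGraph

variable {P : Set (V × V)}

theorem mem_Y_iff (hP : D.IsPartialIsoGraph P) {p : V × V} (hp : p ∈ P) :
    p.1 ∈ D.Y ↔ p.2 ∈ D.Y := by
  rw [D.mem_Y_iff_notMem_X, D.mem_Y_iff_notMem_X, hP.mem_X_iff p hp]

theorem swapSides (hP : D.IsPartialIsoGraph P) : D.swapSides.IsPartialIsoGraph P :=
  ⟨hP.fst_eq_iff, fun _ hp => hP.mem_Y_iff hp, hP.edge_iff⟩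

theorem of_swapSides (hP : D.swapSides.IsPartialIsoGraph P) : D.IsPartialIsoGraph P :=
  ⟨hP.fst_eq_iff, fun _ hp => hP.mem_Y_iff hp, hP.edge_iff⟩

theorem image_swap (hP : D.IsPartialIsoGraph P) : D.IsPartialIsoGraph (Prod.swap '' P) := by
  refine ⟨?_, ?_, ?_⟩
  · rintro _ ⟨p, hp, rfl⟩ _ ⟨q, hq, rfl⟩
    exact (hP.fst_eq_iff p hp q hq).symm
  · rintro _ ⟨p, hp, rfl⟩
    exact (hP.mem_X_iff p hp).symm
  · rintro _ ⟨p, hp, rfl⟩ _ ⟨q, hq, rfl⟩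
    exact (hP.edge_iff p hp q hq).symm

theorem insert_of_edge_iff (hP : D.IsPartialIsoGraph P) {v w : V}
    (hfst : ∀ p ∈ P, p.1 = v ↔ p.2 = w) (hX : v ∈ D.X ↔ w ∈ D.X)
    (hE : ∀ p ∈ P, (D.E v p.1 ↔ D.E w p.2) ∧ (D.E p.1 v ↔ D.E p.2 w)) :
    D.IsPartialIsoGraph (insert (v, w) P) := by
  refine ⟨?_, ?_, ?_⟩
  · rintro p (rfl | hp) q (rfl | hq)
    exacts [iff_of_true rfl rfl, eq_comm.trans ((hfst q hq).trans eq_comm), hfst p hp,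
      hP.fst_eq_iff p hp q hq]
  · rintro p (rfl | hp)
    exacts [hX, hP.mem_X_iff p hp]
  · rintro p (rfl | hp) q (rfl | hq)
    exacts [iff_of_false (fun he => D.not_opposite _ _ he he)
        (fun he => D.not_opposite _ _ he he), (hE q hq).1, (hE p hp).2, hP.edge_iff p hp q hq]

theorem sUnion {𝒬 : Set (Set (V × V))} (h𝒬 : DirectedOn (· ⊆ ·) 𝒬)
    (hP : ∀ Q ∈ 𝒬, D.IsPartialIsoGraph Q) : D.IsPartialIsoGraph (⋃₀ 𝒬) := by
  have common : ∀ p ∈ ⋃₀ 𝒬, ∀ q ∈ ⋃₀ 𝒬, ∃ Q ∈ 𝒬, p ∈ Q ∧ q ∈ Q := by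
    rintro p ⟨Qp, hQp, hp⟩ q ⟨Qq, hQq, hq⟩
    obtain ⟨Q, hQ, hpQ, hqQ⟩ := h𝒬 Qp hQp Qq hQq
    exact ⟨Q, hQ, hpQ hp, hqQ hq⟩
  refine ⟨fun p hp q hq => ?_, ?_, fun p hp q hq => ?_⟩
  · obtain ⟨Q, hQ, hpQ, hqQ⟩ := common p hp q hq
    exact (hP Q hQ).fst_eq_iff p hpQ q hqQ
  · rintro p ⟨Q, hQ, hp⟩
    exact (hP Q hQ).mem_X_iff p hp
  · obtain ⟨Q, hQ, hpQ, hqQ⟩ := common p hp q hq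
    exact (hP Q hQ).edge_iff p hpQ q hqQ

variable (h : D.IsGenericOrientation)
include h

theorem exists_insert_of_mem_X (hP : D.IsPartialIsoGraph P) (hfin : P.Finite) {v : V}
    (hv : v ∈ D.X) (hnew : ∀ p ∈ P, p.1 ≠ v) : ∃ w, D.IsPartialIsoGraph (insert (v, w) P) := by
  set A := Prod.snd '' {p ∈ P | D.E v p.1}
  set B := Prod.snd '' {p ∈ P | D.E p.1 v}
  set C := Prod.snd '' {p ∈ P | p.1 ∈ D.Y ∧ ¬ D.Adj v p.1}
  have fst_eq : ∀ p ∈ P, ∀ q ∈ P, p.2 = q.2 → p.1 = q.1 := fun p hp q hq =>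
    (hP.fst_eq_iff p hp q hq).mpr
  have hAB : Disjoint A B := by
    rw [disjoint_left]
    rintro _ ⟨p, ⟨hp, hvp⟩, rfl⟩ ⟨q, ⟨hq, hqv⟩, hqp⟩
    exact D.not_opposite _ _ hvp (fst_eq q hq p hp hqp ▸ hqv)
  have hAC : Disjoint A C := by
    rw [disjoint_left]
    rintro _ ⟨p, ⟨hp, hvp⟩, rfl⟩ ⟨q, ⟨hq, -, hvq⟩, hqp⟩
    exact hvq (fst_eq q hq p hp hqp ▸ .inl hvp)
  have hBC : Disjoint B C := by
    rw [disjoint_left]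
    rintro _ ⟨p, ⟨hp, hpv⟩, rfl⟩ ⟨q, ⟨hq, -, hvq⟩, hqp⟩
    exact hvq (fst_eq q hq p hp hqp ▸ .inr hpv)
  obtain ⟨w, hw, hwP, hAw, hBw, hCw⟩ := h.exists_mem_X_notMem
    ((hfin.sep _).image _) ((hfin.sep _).image _) ((hfin.sep _).image _)
    ((hfin.image Prod.snd).inter_of_left D.X)
    (by rintro _ ⟨p, ⟨hp, hvp⟩, rfl⟩
        exact (hP.mem_Y_iff hp).mp (mem_Y_of_edge_of_mem_X hv hvp))
    (by rintro _ ⟨p, ⟨hp, hpv⟩, rfl⟩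
        exact (hP.mem_Y_iff hp).mp (mem_Y_of_edge_to_mem_X hv hpv))
    (by rintro _ ⟨p, ⟨hp, hpY, -⟩, rfl⟩; exact (hP.mem_Y_iff hp).mp hpY)
    inter_subset_right hAB hAC hBC
  refine ⟨w, hP.insert_of_edge_iff
    (fun p hp => iff_of_false (hnew p hp) fun hpw => hwP ⟨⟨p, hp, hpw⟩, hw⟩)
    (iff_of_true hv hw) fun p hp => ?_⟩
  exact edge_iff_and_edge_iff_of_imp hv hw (hP.mem_X_iff p hp)
    (fun hvp => hAw ⟨p, ⟨hp, hvp⟩, rfl⟩) (fun hpv => hBw ⟨p, ⟨hp, hpv⟩, rfl⟩)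
    fun hpY hvp => (hCw ⟨p, ⟨hp, hpY, hvp⟩, rfl⟩).2

theorem exists_insert_with_fst (hP : D.IsPartialIsoGraph P) (hfin : P.Finite) (v : V) :
    ∃ w, D.IsPartialIsoGraph (insert (v, w) P) := by
  by_cases hdom : ∃ p ∈ P, p.1 = v
  · obtain ⟨p, hp, rfl⟩ := hdom
    exact ⟨p.2, by rwa [Prod.mk.eta, insert_eq_of_mem hp]⟩
  push Not at hdom
  by_cases hv : v ∈ D.X
  · exact hP.exists_insert_of_mem_X h hfin hv hdom
  · obtain ⟨w, hw⟩ := hP.swapSides.exists_insert_of_mem_X h.swapSides hfin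
      (D.mem_Y_iff_notMem_X.mpr hv) hdom
    exact ⟨w, hw.of_swapSides⟩

theorem exists_insert_with_snd (hP : D.IsPartialIsoGraph P) (hfin : P.Finite) (w : V) :
    ∃ v, D.IsPartialIsoGraph (insert (v, w) P) := by
  obtain ⟨v, hv⟩ := hP.image_swap.exists_insert_with_fst h (hfin.image _) w
  exact ⟨v, by simpa [image_insert_eq, image_image] using hv.image_swap⟩

omit h

theorem exists_isAuto_of_total (hP : D.IsPartialIsoGraph P) (htot : ∀ v, ∃ w, (v, w) ∈ P)
    (hsurj : ∀ w, ∃ v, (v, w) ∈ P) :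
    ∃ α : Equiv.Perm V, D.IsAuto α ∧ ∀ p ∈ P, α p.1 = p.2 := by
  choose g hg using htot
  have hg_eq : ∀ p ∈ P, g p.1 = p.2 := fun p hp =>
    (hP.fst_eq_iff (p.1, g p.1) (hg _) p hp).mp rfl
  have hbij : Function.Bijective g :=
    ⟨fun u u' he => (hP.fst_eq_iff (u, g u) (hg u) (u', g u') (hg u')).mpr he,
      fun w => (hsurj w).imp fun v hv => hg_eq _ hv⟩
  exact ⟨Equiv.ofBijective g hbij, ⟨fun v => hP.mem_X_iff _ (hg v),
    fun v => hP.mem_Y_iff (hg v), fun u v => hP.edge_iff _ (hg u) _ (hg v)⟩, hg_eq⟩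

end IsPartialIsoGraph

theorem IsGenericOrientation.exists_total_isPartialIsoGraph [Countable V]
    (h : D.IsGenericOrientation) {P₀ : Set (V × V)} (hP₀ : D.IsPartialIsoGraph P₀)
    (hfin : P₀.Finite) : ∃ P, P₀ ⊆ P ∧ D.IsPartialIsoGraph P ∧
      (∀ v, ∃ w, (v, w) ∈ P) ∧ ∀ w, ∃ v, (v, w) ∈ P := by
  let Approx := {Q : Set (V × V) // D.IsPartialIsoGraph Q ∧ Q.Finite}
  have := Encodable.ofCountable V
  let cofinal : V ⊕ V → Order.Cofinal Approx
    | .inl v => ⟨{Q | ∃ w, (v, w) ∈ Q.1}, fun Q =>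
        let ⟨w, hw⟩ := Q.2.1.exists_insert_with_fst h Q.2.2 v
        ⟨⟨_, hw, Q.2.2.insert _⟩, ⟨w, mem_insert _ _⟩, subset_insert _ _⟩⟩
    | .inr w => ⟨{Q | ∃ v, (v, w) ∈ Q.1}, fun Q =>
        let ⟨v, hv⟩ := Q.2.1.exists_insert_with_snd h Q.2.2 w
        ⟨⟨_, hv, Q.2.2.insert _⟩, ⟨v, mem_insert _ _⟩, subset_insert _ _⟩⟩
  let I := Order.idealOfCofinals (⟨P₀, hP₀, hfin⟩ : Approx) cofinal
  have meets (i : V ⊕ V) : ∃ Q ∈ I, Q ∈ cofinal i := by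
    obtain ⟨Q, hQi, hQI⟩ := Order.cofinal_meets_idealOfCofinals _ cofinal i
    exact ⟨Q, hQI, hQi⟩
  refine ⟨⋃₀ (Subtype.val '' (I : Set Approx)),
    subset_sUnion_of_mem ⟨_, Order.mem_idealOfCofinals _ cofinal, rfl⟩,
    IsPartialIsoGraph.sUnion (directedOn_image.mpr I.directed) ?_, fun v => ?_, fun w => ?_⟩
  · rintro _ ⟨Q, -, rfl⟩
    exact Q.2.1
  · obtain ⟨Q, hQI, w, hw⟩ := meets (.inl v)
    exact ⟨w, Q.1, ⟨Q, hQI, rfl⟩, hw⟩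
  · obtain ⟨Q, hQI, v, hv⟩ := meets (.inr w)
    exact ⟨v, Q.1, ⟨Q, hQI, rfl⟩, hv⟩

end TwoPartiteDigraph

/-- The countable generic orientation of the generic bipartite graph is homogeneous. -/
theorem stmt_6 {V : Type*} [Countable V] (D : TwoPartiteDigraph V)
    (h : D.IsGenericOrientation) : D.Homogeneous := by
  intro A hA φ hφ
  obtain ⟨P, hsub, hP, htot, hsurj⟩ :=
    h.exists_total_isPartialIsoGraph hφ.isPartialIsoGraph_image (hA.image _)
  obtain ⟨α, hα, hαP⟩ := hP.exists_isAuto_of_total htot hsurj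
  exact ⟨α, hα, fun a ha => hαP _ (hsub ⟨a, ha, rfl⟩)⟩
end

section
/- Let D = (X,Y,E) be a homogeneous 2-partite digraph that is not bipartite. Then for all distinct u, v ∈ X, N⁺(u) ≠ N⁺(v) and N⁻(u) ≠ N⁻(v), and likewise for all distinct u, v ∈ Y. -/
/-!
If two distinct vertices `u, v ∈ X` had the same out-neighbourhood, homogeneity would give an
automorphism fixing `u` and moving `v` to any other `w ∈ X`, so all of `X` would share one
out-neighbourhood `S`. Non-bipartiteness gives an edge `x → y` with `x ∈ X`, so `y ∈ S`, and
an edge `a → b` with `a ∈ Y`. An automorphism moving `y` to `a` puts `a` into `S`, the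
out-neighbourhood of `b`, contradicting `a → b`. Reversing the edges and exchanging the sides
yields the remaining three cases.
-/

namespace TwoPartiteDigraph

variable {V : Type*} {D : TwoPartiteDigraph V} {a b : V}

lemma mem_Y_iff_not_mem_X : a ∈ D.Y ↔ a ∉ D.X := by
  refine ⟨fun hY hX => Set.disjoint_left.1 D.disj hX hY, fun hX => ?_⟩
  have h : a ∈ D.X ∪ D.Y := D.cover ▸ Set.mem_univ a
  exact h.resolve_left hX

lemma mem_X_iff_not_mem_Y : a ∈ D.X ↔ a ∉ D.Y := by
  rw [mem_Y_iff_not_mem_X, not_not]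

lemma mem_X_iff_mem_Y_of_E (h : D.E a b) : a ∈ D.X ↔ b ∈ D.Y := by
  rcases D.mem_of_edge a b h with ⟨ha, hb⟩ | ⟨ha, hb⟩
  · exact iff_of_true ha hb
  · exact iff_of_false (mem_Y_iff_not_mem_X.1 ha) (mem_X_iff_not_mem_Y.1 hb)

lemma mem_Y_iff_mem_X_of_E (h : D.E a b) : a ∈ D.Y ↔ b ∈ D.X :=
  mem_Y_iff_not_mem_X.trans ((mem_X_iff_mem_Y_of_E h).not.trans mem_X_iff_not_mem_Y.symm)

lemma not_E_of_mem_X (ha : a ∈ D.X) (hb : b ∈ D.X) : ¬ D.E a b :=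
  fun h => mem_Y_iff_not_mem_X.1 ((mem_X_iff_mem_Y_of_E h).1 ha) hb

def flip (D : TwoPartiteDigraph V) : TwoPartiteDigraph V where
  X := D.X
  Y := D.Y
  cover := D.cover
  disj := D.disj
  E u v := D.E v u
  mem_of_edge u v h := (D.mem_of_edge v u h).symm.imp And.symm And.symm
  not_opposite u v h := D.not_opposite v u h

def swap (D : TwoPartiteDigraph V) : TwoPartiteDigraph V where
  X := D.Y
  Y := D.X
  cover := Set.union_comm D.X D.Y ▸ D.cover
  disj := D.disj.symm
  E := D.E
  mem_of_edge u v h := (D.mem_of_edge u v h).symm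
  not_opposite := D.not_opposite

lemma Homogeneous.flip (hD : D.Homogeneous) : D.flip.Homogeneous := by
  intro A hA φ ⟨hinj, hX, hY, hE⟩
  obtain ⟨α, ⟨hαX, hαY, hαE⟩, hαφ⟩ :=
    hD A hA φ ⟨hinj, hX, hY, fun a ha b hb => hE b hb a ha⟩
  exact ⟨α, ⟨hαX, hαY, fun u v => hαE v u⟩, hαφ⟩

lemma Homogeneous.swap (hD : D.Homogeneous) : D.swap.Homogeneous := by
  intro A hA φ ⟨hinj, hX, hY, hE⟩
  obtain ⟨α, ⟨hαX, hαY, hαE⟩, hαφ⟩ := hD A hA φ ⟨hinj, hY, hX, hE⟩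
  exact ⟨α, ⟨hαY, hαX, hαE⟩, hαφ⟩

lemma bipartite_flip_iff : D.flip.Bipartite ↔ D.Bipartite :=
  or_comm.trans <| or_congr
    (forall_comm.trans <| forall₂_congr fun a b =>
      imp_congr_right fun (h : D.E a b) => (mem_X_iff_mem_Y_of_E h).symm)
    (forall_comm.trans <| forall₂_congr fun a b =>
      imp_congr_right fun (h : D.E a b) => (mem_Y_iff_mem_X_of_E h).symm)

lemma bipartite_swap_iff : D.swap.Bipartite ↔ D.Bipartite :=
  or_comm

lemma IsAuto.Nplus_apply {α : Equiv.Perm V} (hα : D.IsAuto α) (v : V) :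
    D.Nplus (α v) = α '' D.Nplus v := by
  ext w
  simp only [Set.mem_image_equiv, Nplus, Set.mem_ofPred_eq]
  rw [hα.2.2 v, Equiv.apply_symm_apply]

lemma isPartialIso_of_subset_X {A : Set V} {φ : V → V} (hA : A ⊆ D.X)
    (hφ : Set.MapsTo φ A D.X) (hinj : Set.InjOn φ A) : D.IsPartialIso A φ :=
  ⟨hinj, fun _ ha => iff_of_true (hA ha) (hφ ha),
    fun _ ha => iff_of_false (mem_X_iff_not_mem_Y.1 (hA ha)) (mem_X_iff_not_mem_Y.1 (hφ ha)),
    fun _ ha _ hb =>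
      iff_of_false (not_E_of_mem_X (hA ha) (hA hb)) (not_E_of_mem_X (hφ ha) (hφ hb))⟩

lemma Homogeneous.exists_isAuto_eqOn_of_subset_X (hD : D.Homogeneous) {A : Set V}
    (hfin : A.Finite) {φ : V → V} (hA : A ⊆ D.X) (hφ : Set.MapsTo φ A D.X)
    (hinj : Set.InjOn φ A) : ∃ α : Equiv.Perm V, D.IsAuto α ∧ Set.EqOn α φ A :=
  hD A hfin φ (isPartialIso_of_subset_X hA hφ hinj)

lemma Homogeneous.exists_isAuto_apply_eq_of_mem_Y (hD : D.Homogeneous) (ha : a ∈ D.Y)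
    (hb : b ∈ D.Y) : ∃ α : Equiv.Perm V, D.IsAuto α ∧ α a = b := by
  obtain ⟨α, ⟨hαX, hαY, hαE⟩, hαφ⟩ := hD.swap.exists_isAuto_eqOn_of_subset_X
    (Set.finite_singleton a) (Set.singleton_subset_iff.2 ha) (fun _ _ => hb)
    (Set.injOn_singleton _ _)
  exact ⟨α, ⟨hαY, hαX, hαE⟩, hαφ rfl⟩

lemma Homogeneous.Nplus_eq_of_Nplus_eq (hD : D.Homogeneous) {u v w : V} (hu : u ∈ D.X)
    (hv : v ∈ D.X) (huv : u ≠ v) (h : D.Nplus u = D.Nplus v) (hw : w ∈ D.X) :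
    D.Nplus w = D.Nplus u := by
  classical
  obtain rfl | hwu := eq_or_ne w u
  · rfl
  obtain ⟨α, hα, hαφ⟩ := hD.exists_isAuto_eqOn_of_subset_X (φ := Function.update id v w)
    ((Set.finite_singleton v).insert u) (Set.insert_subset hu (Set.singleton_subset_iff.2 hv))
    (by simp [Set.MapsTo, Function.update_of_ne huv, hu, hw])
    (by simp [Set.InjOn, Function.update_of_ne huv, hwu, hwu.symm])
  have hαu : α u = u := (hαφ (Set.mem_insert u {v})).trans (Function.update_of_ne huv _ _)
  have hαv : α v = w := (hαφ (Set.mem_insert_of_mem u rfl)).trans (Function.update_self _ _ _)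
  calc D.Nplus w = α '' D.Nplus v := by rw [← hαv, hα.Nplus_apply]
    _ = α '' D.Nplus u := by rw [h]
    _ = D.Nplus u := by rw [← hα.Nplus_apply, hαu]

lemma Homogeneous.bipartite_of_Nplus_eq (hD : D.Homogeneous)
    (hX : ∀ u ∈ D.X, ∀ v ∈ D.X, D.Nplus u = D.Nplus v) : D.Bipartite := by
  by_contra hnb
  obtain ⟨⟨a, b, hab, haX⟩, ⟨x, y, hxy, hxY⟩⟩ :
      (∃ a b, D.E a b ∧ a ∉ D.X) ∧ ∃ x y, D.E x y ∧ x ∉ D.Y := by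
    simpa [Bipartite, not_or] using hnb
  have hxX : x ∈ D.X := mem_X_iff_not_mem_Y.2 hxY
  have haY : a ∈ D.Y := mem_Y_iff_not_mem_X.2 haX
  obtain ⟨α, hα, hαy⟩ := hD.exists_isAuto_apply_eq_of_mem_Y
    ((mem_X_iff_mem_Y_of_E hxy).1 hxX) haY
  have ha : a ∈ D.Nplus (α x) := hαy ▸ (hα.2.2 x y).1 hxy
  rw [hX _ ((hα.1 x).1 hxX) b ((mem_Y_iff_mem_X_of_E hab).1 haY)] at ha
  exact D.not_opposite a b hab ha

theorem Nplus_injOn_X (hD : D.Homogeneous) (hnb : ¬ D.Bipartite) : Set.InjOn D.Nplus D.X := by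
  intro u hu v hv h
  by_contra huv
  have hconst := fun w (hw : w ∈ D.X) => hD.Nplus_eq_of_Nplus_eq hu hv huv h hw
  exact hnb <| hD.bipartite_of_Nplus_eq fun w hw w' hw' => (hconst w hw).trans (hconst w' hw').symm

end TwoPartiteDigraph

open TwoPartiteDigraph

/-- In a homogeneous non-bipartite 2-partite digraph, distinct vertices on the same
side have distinct out-neighbourhoods and distinct in-neighbourhoods. -/
theorem stmt_11 {V : Type*} (D : TwoPartiteDigraph V) (hhom : D.Homogeneous)
    (hnb : ¬ D.Bipartite) :
    (∀ u ∈ D.X, ∀ v ∈ D.X, u ≠ v → D.Nplus u ≠ D.Nplus v ∧ D.Nminus u ≠ D.Nminus v) ∧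
    (∀ u ∈ D.Y, ∀ v ∈ D.Y, u ≠ v → D.Nplus u ≠ D.Nplus v ∧ D.Nminus u ≠ D.Nminus v) := by
  have hnb_flip : ¬ D.flip.Bipartite := bipartite_flip_iff.not.2 hnb
  have hnb_swap : ¬ D.swap.Bipartite := bipartite_swap_iff.not.2 hnb
  have hnb_swap_flip : ¬ D.swap.flip.Bipartite := bipartite_flip_iff.not.2 hnb_swap
  refine ⟨fun u hu v hv huv => ⟨?_, ?_⟩, fun u hu v hv huv => ⟨?_, ?_⟩⟩
  · exact (Nplus_injOn_X hhom hnb).ne hu hv huv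
  · exact (Nplus_injOn_X hhom.flip hnb_flip).ne hu hv huv
  · exact (Nplus_injOn_X hhom.swap hnb_swap).ne hu hv huv
  · exact (Nplus_injOn_X hhom.swap.flip hnb_swap_flip).ne hu hv huv
end
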